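/- For every positive integer n, every z_1,...,z_n on the unit circle, and every δ with 0 < δ < 1/2, the set E ∩ Δ has Lebesgue measure at least K(δ)/n, where E = {x ∈ [−1,1] : |Re(x·g_n(x))| ≥ δn}, Δ = {x ∈ [−1,1] : |x| > 1 − 3/((2+4δ)n)}, K(δ) = (3/32)(1−2δ)/(1+2δ)², and g_n(x) = ∑_{k=1}^n 1/(x−z_k). -/

import Mathlib

/-!
For real `x` and `‖z‖ = 1`, `Re (x / (x - z)) = (1 - P)/2` with `P = (1 - x²)/‖x - z‖²` the
Poisson kernel, so `|Re (x g_n(x))| ≥ δn` wherever the Poisson sum `∑ P_k` is at most `(1 - 2δ)n`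
or at least `(1 + 2δ)n`. Write `‖x - z‖² = (1 - x)² + c x` with `c = ‖1 - z‖²` and work at the
scale `L = 1/((2 + 4δ)n)`. If some `c_k ≤ 2L²`, that term alone is at least `(1 + 2δ)n` on
`[1 - 2L, 1 - L]`. Otherwise, with `m = K(δ)/n ≤ 3L/16` the required length, each term is at
least `13L/(16 c_k)` on `[1 - L, 1 - 13L/16]` and at most `4m/c_k` on `[1 - m, 1]`; according as
`∑ 1/c_k` is large or small, the sum is large on the first window or small on the second.
-/

open MeasureTheory Set

/-- For `‖z‖ = 1` and `c = ‖1 - z‖²`, `poissonTerm c x` is the Poisson kernel `(1 - x²) / ‖x - z‖²`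
(see `Complex.normSq_ofReal_sub_of_norm_eq_one`). -/
noncomputable def poissonTerm (c x : ℝ) : ℝ := (1 - x ^ 2) / ((1 - x) ^ 2 + c * x)

lemma Complex.normSq_ofReal_sub_of_norm_eq_one (x : ℝ) {w : ℂ} (hw : ‖w‖ = 1) :
    normSq (x - w) = (1 - x) ^ 2 + normSq (1 - w) * x := by
  have h : w.re * w.re + w.im * w.im = 1 := by
    rw [← normSq_apply, normSq_eq_norm_sq, hw, one_pow]
  simp only [normSq_apply, sub_re, sub_im, ofReal_re, ofReal_im, one_re, one_im]
  linear_combination (1 - x) * h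

lemma Complex.re_ofReal_div_ofReal_sub_of_norm_eq_one {x : ℝ} {w : ℂ} (hw : ‖w‖ = 1)
    (hxw : (x : ℂ) ≠ w) :
    ((x : ℂ) / (x - w)).re = (1 - poissonTerm (normSq (1 - w)) x) / 2 := by
  have hD : normSq ((x : ℂ) - w) ≠ 0 := (normSq_pos.2 (sub_ne_zero.2 hxw)).ne'
  have h : w.re * w.re + w.im * w.im = 1 := by
    rw [← normSq_apply, normSq_eq_norm_sq, hw, one_pow]
  rw [poissonTerm, ← normSq_ofReal_sub_of_norm_eq_one x hw, div_re]
  field_simp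
  simp only [normSq_apply, sub_re, sub_im, ofReal_re, ofReal_im]
  linear_combination -h

lemma Complex.re_ofReal_mul_sum_one_div_sub {ι : Type*} [Fintype ι] {z : ι → ℂ}
    (hz : ∀ k, ‖z k‖ = 1) {x : ℝ} (hx : ∀ k, (x : ℂ) ≠ z k) :
    ((x : ℂ) * ∑ k, 1 / ((x : ℂ) - z k)).re =
      (Fintype.card ι - ∑ k, poissonTerm (normSq (1 - z k)) x) / 2 := by
  simp only [Finset.mul_sum, mul_one_div, re_sum,
    re_ofReal_div_ofReal_sub_of_norm_eq_one (hz _) (hx _)]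
  rw [← Finset.sum_div, Finset.sum_sub_distrib, Finset.sum_const, Finset.card_univ, nsmul_one]

lemma Complex.le_abs_re_ofReal_mul_sum_one_div_sub {ι : Type*} [Fintype ι] {z : ι → ℂ}
    (hz : ∀ k, ‖z k‖ = 1) {x δ : ℝ} (hx : ∀ k, (x : ℂ) ≠ z k)
    (h : ∑ k, poissonTerm (normSq (1 - z k)) x ≤ (1 - 2 * δ) * Fintype.card ι ∨
      (1 + 2 * δ) * Fintype.card ι ≤ ∑ k, poissonTerm (normSq (1 - z k)) x) :
    δ * Fintype.card ι ≤ |((x : ℂ) * ∑ k, 1 / ((x : ℂ) - z k)).re| := by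
  rw [re_ofReal_mul_sum_one_div_sub hz hx, le_abs']
  rcases h with h | h
  · right; linarith
  · left; linarith

lemma sq_one_sub_add_mul_pos {c x : ℝ} (hc : 0 ≤ c) (hx : x ∈ Ico (0 : ℝ) 1) :
    0 < (1 - x) ^ 2 + c * x := by
  nlinarith [hx.1, hx.2, mul_nonneg hc hx.1]

lemma poissonTerm_nonneg {c x : ℝ} (hc : 0 ≤ c) (hx : x ∈ Icc (0 : ℝ) 1) :
    0 ≤ poissonTerm c x :=
  div_nonneg (by nlinarith [hx.1, hx.2]) (by nlinarith [hx.1, mul_nonneg hc hx.1])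

lemma one_div_two_mul_le_poissonTerm {c x L : ℝ} (hL0 : 0 < L) (hL : L ≤ 1 / 2) (hc0 : 0 ≤ c)
    (hc : c ≤ 2 * L ^ 2) (hx : x ∈ Icc (1 - 2 * L) (1 - L)) :
    1 / (2 * L) ≤ poissonTerm c x := by
  obtain ⟨hx1, hx2⟩ := hx
  have hx0 : 0 ≤ x := by linarith
  rw [poissonTerm, div_le_div_iff₀ (by positivity) (by nlinarith [mul_nonneg hc0 hx0])]
  nlinarith [mul_le_mul_of_nonneg_right hc hx0, mul_nonneg (sub_nonneg.2 hx2) (sub_nonneg.2 hx1),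
    mul_nonneg (mul_nonneg hL0.le (sub_nonneg.2 hx2)) (by linarith : (0 : ℝ) ≤ 2 * x - 1 + 2 * L)]

lemma div_le_poissonTerm {c x L : ℝ} (hL0 : 0 < L) (hL : L ≤ 1 / 2) (hc : 2 * L ^ 2 ≤ c)
    (hx : x ∈ Icc (1 - L) (1 - 13 * L / 16)) :
    13 * L / (16 * c) ≤ poissonTerm c x := by
  obtain ⟨hx1, hx2⟩ := hx
  have hc0 : 0 < c := by nlinarith
  have hs : (1 - x) ^ 2 ≤ c := by nlinarith
  rw [poissonTerm,
    div_le_div_iff₀ (by positivity) (by nlinarith [mul_pos hc0 (by linarith : 0 < x)])]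
  nlinarith [mul_nonneg (mul_nonneg hc0.le (by linarith : (0 : ℝ) ≤ 1 - x - 13 * L / 16))
    (by linarith : (0 : ℝ) ≤ 1 + x), mul_le_mul_of_nonneg_left hs hL0.le]

lemma poissonTerm_le_div {c x m : ℝ} (hc : 0 < c) (hm : m ≤ 1 / 2) (hx : x ∈ Icc (1 - m) 1) :
    poissonTerm c x ≤ 4 * m / c := by
  obtain ⟨hx1, hx2⟩ := hx
  rw [poissonTerm, div_le_div_iff₀ (by nlinarith [mul_pos hc (by linarith : 0 < x)]) hc]
  nlinarith [mul_nonneg (mul_nonneg hc.le (by linarith : (0 : ℝ) ≤ m + x - 1))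
    (by linarith : (0 : ℝ) ≤ 1 + x), mul_nonneg (mul_nonneg hc.le (by linarith : (0 : ℝ) ≤ m))
    (by linarith : (0 : ℝ) ≤ 2 * x - 1), mul_nonneg (by linarith : (0 : ℝ) ≤ m) (sq_nonneg (1 - x))]

theorem exists_Icc_sum_poissonTerm_le_or_ge {ι : Type*} [Fintype ι] {c : ι → ℝ}
    (hc : ∀ k, 0 ≤ c k) {L r m : ℝ} (hL0 : 0 < L) (hL : L ≤ 1 / 2) (hr0 : 0 ≤ r) (hr1 : r ≤ 1)
    (hm : m ≤ 3 * r * L / 16) :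
    ∃ p ∈ Icc (1 - 2 * L) (1 - m), ∀ x ∈ Icc p (p + m), (∀ k, 0 < (1 - x) ^ 2 + c k * x) ∧
      (∑ k, poissonTerm (c k) x ≤ r / (2 * L) ∨ 1 / (2 * L) ≤ ∑ k, poissonTerm (c k) x) := by
  have hmL : m ≤ 3 * L / 16 := hm.trans (by nlinarith)
  by_cases hnear : ∃ k, c k ≤ 2 * L ^ 2
  · obtain ⟨k₀, hk₀⟩ := hnear
    refine ⟨1 - 2 * L, ⟨le_rfl, by linarith⟩, fun x hx => ?_⟩
    have hx₀ : x ∈ Ico (0 : ℝ) 1 := ⟨by linarith [hx.1], by linarith [hx.2]⟩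
    refine ⟨fun k => sq_one_sub_add_mul_pos (hc k) hx₀, Or.inr ?_⟩
    calc 1 / (2 * L) ≤ poissonTerm (c k₀) x :=
          one_div_two_mul_le_poissonTerm hL0 hL (hc k₀) hk₀ ⟨hx.1, by linarith [hx.2]⟩
      _ ≤ ∑ k, poissonTerm (c k) x :=
          Finset.single_le_sum (fun k _ => poissonTerm_nonneg (hc k) (Ico_subset_Icc_self hx₀))
            (Finset.mem_univ k₀)
  push Not at hnear
  have hc₀ : ∀ k, 0 < c k := fun k => lt_of_le_of_lt (by positivity) (hnear k)
  set Q := ∑ k, 1 / c k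
  by_cases hQ : 1 / (2 * L) ≤ 13 * L / 16 * Q
  · refine ⟨1 - L, ⟨by linarith, by linarith⟩, fun x hx => ?_⟩
    have hx₀ : x ∈ Ico (0 : ℝ) 1 := ⟨by linarith [hx.1], by linarith [hx.2]⟩
    refine ⟨fun k => sq_one_sub_add_mul_pos (hc k) hx₀, Or.inr ?_⟩
    calc 1 / (2 * L) ≤ 13 * L / 16 * Q := hQ
      _ = ∑ k, 13 * L / (16 * c k) := by
          rw [Finset.mul_sum]
          exact Finset.sum_congr rfl fun k _ => by field_simp
      _ ≤ ∑ k, poissonTerm (c k) x :=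
          Finset.sum_le_sum fun k _ => div_le_poissonTerm hL0 hL (hnear k).le
            ⟨hx.1, by linarith [hx.2]⟩
  · push Not at hQ
    refine ⟨1 - m, ⟨by linarith, le_rfl⟩, fun x hx => ?_⟩
    have hm₀ : 0 ≤ m := by linarith [hx.1, hx.2]
    have hx₀ : 0 < x := by linarith [hx.1]
    refine ⟨fun k => by have := hc₀ k; positivity, Or.inl ?_⟩
    have hQ₀ : 0 ≤ Q := Finset.sum_nonneg fun k _ => (one_div_pos.2 (hc₀ k)).le
    calc ∑ k, poissonTerm (c k) x ≤ ∑ k, 4 * m / c k :=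
          Finset.sum_le_sum fun k _ => poissonTerm_le_div (hc₀ k) (by linarith)
            ⟨hx.1, by linarith [hx.2]⟩
      _ = 4 * m * Q := by
          rw [Finset.mul_sum]
          exact Finset.sum_congr rfl fun k _ => by field_simp
      _ ≤ r / (2 * L) := by
          rw [lt_div_iff₀ (by positivity)] at hQ
          rw [le_div_iff₀ (by positivity)]
          nlinarith [mul_le_mul_of_nonneg_right hm hQ₀, mul_nonneg hr0 hQ₀]

theorem stmt9 (n : ℕ) (hn : 0 < n) (z : Fin n → ℂ) (hz : ∀ k, ‖z k‖ = 1)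
    (δ : ℝ) (hδ0 : 0 < δ) (hδ1 : δ < 1 / 2) :
    ENNReal.ofReal ((3 / 32) * (1 - 2 * δ) / (1 + 2 * δ) ^ 2 / n) ≤
      volume ({x : ℝ | x ∈ Icc (-1 : ℝ) 1 ∧
          δ * n ≤ |((x : ℂ) * ∑ k, 1 / ((x : ℂ) - z k)).re|} ∩
        {x : ℝ | x ∈ Icc (-1 : ℝ) 1 ∧ 1 - 3 / ((2 + 4 * δ) * n) < |x|}) := by
  have hn' : (1 : ℝ) ≤ n := Nat.one_le_cast.2 hn
  set L := 1 / ((2 + 4 * δ) * n) with hL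
  set r := (1 - 2 * δ) / (1 + 2 * δ) with hr
  have hL0 : 0 < L := by positivity
  have hL2 : L ≤ 1 / 2 := by
    rw [hL]; gcongr; nlinarith
  have hr0 : 0 ≤ r := div_nonneg (by linarith) (by linarith)
  have hr1 : r ≤ 1 := (div_le_one (by linarith)).2 (by linarith)
  have hm : 3 / 32 * (1 - 2 * δ) / (1 + 2 * δ) ^ 2 / n = 3 * r * L / 16 := by
    rw [hL, hr]; field_simp; ring
  have hlow : r / (2 * L) = (1 - 2 * δ) * n := by rw [hL, hr]; field_simp; ring
  have hhigh : 1 / (2 * L) = (1 + 2 * δ) * n := by rw [hL]; field_simp; ring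
  obtain ⟨p, hp, hwindow⟩ := exists_Icc_sum_poissonTerm_le_or_ge
    (fun k => Complex.normSq_nonneg (1 - z k)) hL0 hL2 hr0 hr1 le_rfl
  rw [hm]
  calc ENNReal.ofReal (3 * r * L / 16) = volume (Icc p (p + 3 * r * L / 16)) := by
        rw [Real.volume_Icc, add_sub_cancel_left]
    _ ≤ _ := measure_mono fun x hx => ?_
  obtain ⟨hpos, hF⟩ := hwindow x hx
  have hxz : ∀ k, (x : ℂ) ≠ z k := fun k hxk => (hpos k).ne' <| by
    rw [← Complex.normSq_ofReal_sub_of_norm_eq_one x (hz k), hxk, sub_self, map_zero]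
  have hx0 : 0 ≤ x := by linarith [hp.1, hx.1]
  have hx1 : x ∈ Icc (-1 : ℝ) 1 := ⟨by linarith, by linarith [hp.2, hx.2]⟩
  refine ⟨⟨hx1, ?_⟩, hx1, ?_⟩
  · rw [hlow, hhigh] at hF
    simpa only [Fintype.card_fin] using
      Complex.le_abs_re_ofReal_mul_sum_one_div_sub hz hxz (by simpa only [Fintype.card_fin] using hF)
  · rw [abs_of_nonneg hx0, ← mul_one_div 3, ← hL]
    linarith [hp.1, hx.1]
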